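/- arXiv:2504.10207 — 7 statements merged into one kernel-verified Lean document; each statement's English description precedes it below -/
import Mathlib

section
/- The Zeckendorf representation is unique: if a₁F₁ + a₂F₂ + ⋯ + aₙFₙ = b₁F₁ + b₂F₂ + ⋯ + b_mF_m, where all digits aₖ, bₗ lie in {0,1}, the top digits satisfy aₙ = 1 and b_m = 1, and no two consecutive digits equal 1 (a_s·a_{s+1} = 0 for 1 ≤ s ≤ n−1 and b_s·b_{s+1} = 0 for 1 ≤ s ≤ m−1), then n = m and aₖ = bₖ for all k. -/
/-!
A digit string of length `n` with digits in `{0,1}` and no two adjacent ones has value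
`< F_{n+1}`: if its top digit is `1`, the digit below vanishes and `F_{n-1} + F_n = F_{n+1}`.
Since a string whose top digit is `1` has value `≥ F_n`, the value determines the length.
For strings of equal length `n`, the top digit and the rest of the value are the quotient and
the remainder of the value modulo `F_n`, so the digits are recovered from the top down.
-/

open Finset

theorem Nat.eq_and_eq_of_add_mul_eq_add_mul {x y d e F : ℕ} (hx : x < F) (hy : y < F)
    (h : x + d * F = y + e * F) : x = y ∧ d = e := by
  have hF : 0 < F := hx.pos
  obtain ⟨hd, hxm⟩ := (Nat.div_mod_unique (d := d) hF).2 ⟨by rw [mul_comm], hx⟩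
  obtain ⟨he, hym⟩ :=
    (Nat.div_mod_unique (a := x + d * F) (d := e) hF).2 ⟨by rw [h, mul_comm], hy⟩
  exact ⟨hxm.symm.trans hym, hd.symm.trans he⟩

namespace Zeckendorf

def value (a : ℕ → ℕ) (n : ℕ) : ℕ := ∑ k ∈ Icc 1 n, a k * Nat.fib (k + 1)

structure IsDigits (a : ℕ → ℕ) (n : ℕ) : Prop where
  le_one : ∀ k, 1 ≤ k → k ≤ n → a k ≤ 1
  mul_succ_eq_zero : ∀ s, 1 ≤ s → s ≤ n - 1 → a s * a (s + 1) = 0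

variable {a b : ℕ → ℕ} {n m : ℕ}

theorem value_succ (a : ℕ → ℕ) (n : ℕ) :
    value a (n + 1) = value a n + a (n + 1) * Nat.fib (n + 2) :=
  sum_Icc_succ_top (Nat.le_add_left 1 n) _

theorem fib_succ_le_value (ha : a n = 1) (hn : 1 ≤ n) : Nat.fib (n + 1) ≤ value a n := by
  unfold value
  simpa [ha] using single_le_sum (f := fun k => a k * Nat.fib (k + 1)) (fun _ _ => Nat.zero_le _)
    (mem_Icc.2 ⟨hn, le_rfl⟩)

theorem IsDigits.mono (ha : IsDigits a n) (hmn : m ≤ n) : IsDigits a m :=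
  ⟨fun k hk hkm => ha.le_one k hk (hkm.trans hmn),
    fun s hs hsm => ha.mul_succ_eq_zero s hs (hsm.trans (Nat.sub_le_sub_right hmn 1))⟩

theorem IsDigits.value_lt_fib : ∀ {n : ℕ}, IsDigits a n → value a n < Nat.fib (n + 2)
  | 0, _ => Nat.fib_pos.2 two_pos
  | 1, ha => by
    have := ha.le_one 1 le_rfl le_rfl
    simp only [value, Icc_self, sum_singleton, Nat.fib_two, Nat.reduceAdd]
    rw [show Nat.fib 3 = 2 from rfl]
    omega
  | n + 2, ha => by
    have hfib : Nat.fib (n + 4) = Nat.fib (n + 2) + Nat.fib (n + 3) := Nat.fib_add_two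
    rcases Nat.le_one_iff_eq_zero_or_eq_one.1 (ha.le_one (n + 2) (by omega) le_rfl) with htop | htop
    · calc value a (n + 2) = value a (n + 1) := by simp [value_succ a (n + 1), htop]
        _ < Nat.fib (n + 3) := (ha.mono (Nat.le_add_right (n + 1) 1)).value_lt_fib
        _ ≤ Nat.fib (n + 4) := Nat.fib_le_fib_succ
    · have hprev : a (n + 1) = 0 := by
        simpa [htop] using ha.mul_succ_eq_zero (n + 1) (by omega) (by omega)
      calc value a (n + 2) = value a n + Nat.fib (n + 3) := by
            simp [value_succ a (n + 1), value_succ a n, htop, hprev]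
        _ < Nat.fib (n + 2) + Nat.fib (n + 3) := by
            gcongr; exact (ha.mono (Nat.le_add_right n 2)).value_lt_fib
        _ = Nat.fib (n + 4) := hfib.symm

theorem IsDigits.eqOn_of_value_eq : ∀ {n : ℕ}, IsDigits a n → IsDigits b n →
    value a n = value b n → ∀ k, 1 ≤ k → k ≤ n → a k = b k
  | 0, _, _, _, _, hk, hkn => by omega
  | n + 1, ha, hb, h, k, hk, hkn => by
    rw [value_succ, value_succ] at h
    obtain ⟨hlow, htop⟩ := Nat.eq_and_eq_of_add_mul_eq_add_mul
      (ha.mono n.le_succ).value_lt_fib (hb.mono n.le_succ).value_lt_fib h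
    rcases hkn.lt_or_eq with hlt | rfl
    · exact eqOn_of_value_eq (ha.mono n.le_succ) (hb.mono n.le_succ) hlow k hk
        (Nat.lt_succ_iff.1 hlt)
    · exact htop

theorem IsDigits.le_of_value_le (ha : IsDigits a n) (hbm : b m = 1) (h : value b m ≤ value a n) :
    m ≤ n := by
  by_contra! hnm
  have : Nat.fib (m + 1) < Nat.fib (m + 1) :=
    calc Nat.fib (m + 1) ≤ value b m := fib_succ_le_value hbm (by omega)
      _ ≤ value a n := h
      _ < Nat.fib (n + 2) := ha.value_lt_fib
      _ ≤ Nat.fib (m + 1) := Nat.fib_mono (by omega)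
  exact lt_irrefl _ this

end Zeckendorf

theorem zeckendorf_unique_general (n m : ℕ) (a b : ℕ → ℕ)
    (ha01 : ∀ k : ℕ, 1 ≤ k → k ≤ n → a k ≤ 1)
    (hb01 : ∀ k : ℕ, 1 ≤ k → k ≤ m → b k ≤ 1)
    (han : a n = 1) (hbm : b m = 1)
    (hac : ∀ s : ℕ, 1 ≤ s → s ≤ n - 1 → a s * a (s + 1) = 0)
    (hbc : ∀ s : ℕ, 1 ≤ s → s ≤ m - 1 → b s * b (s + 1) = 0)
    (hsum : ∑ k ∈ Finset.Icc 1 n, a k * Nat.fib (k + 1) =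
            ∑ k ∈ Finset.Icc 1 m, b k * Nat.fib (k + 1)) :
    n = m ∧ ∀ k : ℕ, 1 ≤ k → k ≤ n → a k = b k := by
  have ha : Zeckendorf.IsDigits a n := ⟨ha01, hac⟩
  have hb : Zeckendorf.IsDigits b m := ⟨hb01, hbc⟩
  obtain rfl : n = m := le_antisymm (hb.le_of_value_le han hsum.le) (ha.le_of_value_le hbm hsum.ge)
  exact ⟨rfl, ha.eqOn_of_value_eq hb hsum⟩

/-- Zeckendorf uniqueness: if two representations
`a₁F₁ + ⋯ + aₙFₙ = b₁F₁ + ⋯ + b_mF_m` have digits in `{0,1}`, top digits equal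
to `1`, and no two consecutive digits equal to `1`, then `n = m` and the digits
coincide.  Here `Fₖ = Nat.fib (k+1)`, i.e. `F₀ = F₁ = 1`, `F₂ = 2`, `F₃ = 3`, …. -/
theorem zeckendorf_unique (n m : ℕ) (a b : ℕ → ℕ) (hn : 1 ≤ n) (hm : 1 ≤ m)
    (ha01 : ∀ k : ℕ, 1 ≤ k → k ≤ n → a k ≤ 1)
    (hb01 : ∀ k : ℕ, 1 ≤ k → k ≤ m → b k ≤ 1)
    (han : a n = 1) (hbm : b m = 1)
    (hac : ∀ s : ℕ, 1 ≤ s → s ≤ n - 1 → a s * a (s + 1) = 0)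
    (hbc : ∀ s : ℕ, 1 ≤ s → s ≤ m - 1 → b s * b (s + 1) = 0)
    (hsum : ∑ k ∈ Finset.Icc 1 n, a k * Nat.fib (k + 1) =
            ∑ k ∈ Finset.Icc 1 m, b k * Nat.fib (k + 1)) :
    n = m ∧ ∀ k : ℕ, 1 ≤ k → k ≤ n → a k = b k :=
  zeckendorf_unique_general n m a b ha01 hb01 han hbm hac hbc hsum
end

section
/- For every real number a ≥ 0 there exists a sequence (ᾱₖ)_{k≥1} with each ᾱₖ ∈ {0,1} such that for every natural number n ≥ 1 one has 0 ≤ a − ⌊a⌋ − Σ_{k=1}^{n} ᾱₖ/Fₖ < 1/Fₙ; consequently a = ⌊a⌋ + Σ_{k=1}^{∞} ᾱₖ/Fₖ. -/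
/-!
Expand `x = a - ⌊a⌋ ∈ [0, 1)` greedily in the weights `w k = 1 / F_k`: at step `k` take the
digit `1` exactly when `w k` still fits into the remainder. Since `F_{k+1} ≤ 2 F_k`, i.e.
`w k ≤ 2 w (k+1)`, a remainder below `w k` stays below `w (k+1)` after the next step, so the
remainder after `n` steps lies in `[0, w n)`; as `w n → 0`, the series converges to `x`.
-/

open Finset Filter Topology

section GreedyExpansion

variable (w : ℕ → ℝ) (x : ℝ)

noncomputable def greedyRem : ℕ → ℝ
  | 0 => x
  | n + 1 => if w (n + 1) ≤ greedyRem n then greedyRem n - w (n + 1) else greedyRem n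

noncomputable def greedyDigit : ℕ → ℕ
  | 0 => 0
  | k + 1 => if w (k + 1) ≤ greedyRem w x k then 1 else 0

theorem greedyDigit_le_one (k : ℕ) : greedyDigit w x k ≤ 1 := by
  cases k
  · simp [greedyDigit]
  · simp only [greedyDigit]
    split_ifs <;> simp

theorem greedyRem_succ (n : ℕ) :
    greedyRem w x (n + 1) = greedyRem w x n - greedyDigit w x (n + 1) * w (n + 1) := by
  simp only [greedyRem, greedyDigit]
  split_ifs <;> simp

theorem greedyRem_eq_sub_sum (n : ℕ) :
    greedyRem w x n = x - ∑ k ∈ range n, (greedyDigit w x (k + 1) : ℝ) * w (k + 1) := by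
  induction n with
  | zero => simp [greedyRem]
  | succ n ih => rw [greedyRem_succ, ih, sum_range_succ]; ring

variable {w x}

theorem greedyRem_mem_Ico (hw : ∀ n, w n ≤ 2 * w (n + 1)) (hx : x ∈ Set.Ico 0 (w 0)) :
    ∀ n, greedyRem w x n ∈ Set.Ico 0 (w n)
  | 0 => hx
  | n + 1 => by
    obtain ⟨h₀, h₁⟩ := greedyRem_mem_Ico hw hx n
    simp only [greedyRem]
    split_ifs with h
    · exact ⟨sub_nonneg.2 h, by linarith [hw n]⟩
    · exact ⟨h₀, not_le.1 h⟩

theorem hasSum_greedyDigit_mul (hw : ∀ n, w n ≤ 2 * w (n + 1)) (hx : x ∈ Set.Ico 0 (w 0))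
    (hw₀ : Tendsto w atTop (𝓝 0)) :
    HasSum (fun k => (greedyDigit w x (k + 1) : ℝ) * w (k + 1)) x := by
  have hrem := greedyRem_mem_Ico hw hx
  have hw_nonneg (n : ℕ) : 0 ≤ w n := (hrem n).1.trans (hrem n).2.le
  rw [hasSum_iff_tendsto_nat_of_nonneg fun k => mul_nonneg (Nat.cast_nonneg _) (hw_nonneg _)]
  have hrem₀ : Tendsto (greedyRem w x) atTop (𝓝 0) :=
    squeeze_zero (fun n => (hrem n).1) (fun n => (hrem n).2.le) hw₀
  simpa [greedyRem_eq_sub_sum] using (tendsto_const_nhds (x := x)).sub hrem₀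

end GreedyExpansion

theorem Finset.sum_Icc_one_eq_sum_range {M : Type*} [AddCommMonoid M] (f : ℕ → M) (n : ℕ) :
    ∑ k ∈ Icc 1 n, f k = ∑ k ∈ range n, f (k + 1) := by
  induction n with
  | zero => simp
  | succ n ih => rw [sum_Icc_succ_top (by omega), ih, sum_range_succ]

theorem Nat.fib_add_two_le_two_mul_fib_add_one (n : ℕ) : fib (n + 2) ≤ 2 * fib (n + 1) := by
  rw [fib_add_two, two_mul]
  exact Nat.add_le_add_right fib_le_fib_succ _

theorem one_div_fib_succ_le_two_mul (n : ℕ) :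
    1 / (Nat.fib (n + 1) : ℝ) ≤ 2 * (1 / Nat.fib (n + 2)) := by
  have hpos (m : ℕ) : (0 : ℝ) < Nat.fib (m + 1) := by exact_mod_cast Nat.fib_pos.2 m.succ_pos
  rw [mul_one_div, div_le_div_iff₀ (hpos n) (hpos (n + 1)), one_mul]
  exact_mod_cast Nat.fib_add_two_le_two_mul_fib_add_one n

theorem tendsto_one_div_fib_succ_atTop :
    Tendsto (fun n : ℕ => 1 / (Nat.fib (n + 1) : ℝ)) atTop (𝓝 0) := by
  have hfib : Tendsto (fun n => Nat.fib (n + 1)) atTop atTop :=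
    tendsto_atTop_mono (fun n => show n ≤ _ by have := Nat.le_fib_add_one (n + 1); omega)
      tendsto_id
  exact tendsto_const_nhds.div_atTop (tendsto_natCast_atTop_atTop.comp hfib)

theorem fib_series_representation_exists_general (a : ℝ) :
    ∃ d : ℕ → ℕ,
      (∀ k : ℕ, 1 ≤ k → d k ≤ 1) ∧
      (∀ n : ℕ, 1 ≤ n →
        0 ≤ a - ⌊a⌋ - ∑ k ∈ Finset.Icc 1 n, (d k : ℝ) / Nat.fib (k + 1) ∧
        a - ⌊a⌋ - ∑ k ∈ Finset.Icc 1 n, (d k : ℝ) / Nat.fib (k + 1)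
          < 1 / Nat.fib (n + 1)) ∧
      HasSum (fun k : ℕ => (d (k + 1) : ℝ) / Nat.fib (k + 2)) (a - ⌊a⌋) := by
  set w : ℕ → ℝ := fun k => 1 / Nat.fib (k + 1)
  have hw : ∀ n, w n ≤ 2 * w (n + 1) := one_div_fib_succ_le_two_mul
  have hx : a - ⌊a⌋ ∈ Set.Ico 0 (w 0) := by
    rw [Int.self_sub_floor]
    exact ⟨Int.fract_nonneg a, by simpa [w] using Int.fract_lt_one a⟩
  refine ⟨greedyDigit w (a - ⌊a⌋), fun k _ => greedyDigit_le_one w _ k, fun n _ => ?_, ?_⟩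
  · have h := greedyRem_mem_Ico hw hx n
    rw [greedyRem_eq_sub_sum,
      ← sum_Icc_one_eq_sum_range fun k => (greedyDigit w _ k : ℝ) * w k] at h
    simpa only [w, mul_one_div, Set.mem_Ico] using h
  · simpa only [w, mul_one_div] using
      hasSum_greedyDigit_mul hw hx tendsto_one_div_fib_succ_atTop

/-- For every real `a ≥ 0` there is a sequence of digits `ᾱₖ ∈ {0,1}` such that
`0 ≤ a − ⌊a⌋ − Σ_{k=1}^n ᾱₖ/Fₖ < 1/Fₙ` for all `n ≥ 1`; consequently
`a = ⌊a⌋ + Σ_{k=1}^∞ ᾱₖ/Fₖ`.  Here `Fₖ = Nat.fib (k+1)`, i.e. `F₀ = F₁ = 1`,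
`F₂ = 2`, `F₃ = 3`, `F₄ = 5`, …. -/
theorem fib_series_representation_exists (a : ℝ) (ha : 0 ≤ a) :
    ∃ d : ℕ → ℕ,
      (∀ k : ℕ, 1 ≤ k → d k ≤ 1) ∧
      (∀ n : ℕ, 1 ≤ n →
        0 ≤ a - ⌊a⌋ - ∑ k ∈ Finset.Icc 1 n, (d k : ℝ) / Nat.fib (k + 1) ∧
        a - ⌊a⌋ - ∑ k ∈ Finset.Icc 1 n, (d k : ℝ) / Nat.fib (k + 1)
          < 1 / Nat.fib (n + 1)) ∧
      HasSum (fun k : ℕ => (d (k + 1) : ℝ) / Nat.fib (k + 2)) (a - ⌊a⌋) :=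
  fib_series_representation_exists_general a
end

section
/- For a real number a ≥ 0, the representation a = ⌊a⌋ + Σ_{k=1}^{∞} ᾱₖ/Fₖ with digits in {0,1} satisfying the remainder bounds is unique: if (ᾱₖ)_{k≥1} and (β̄ₖ)_{k≥1} are sequences with values in {0,1} such that for every n ≥ 1 both 0 ≤ a − ⌊a⌋ − Σ_{k=1}^{n} ᾱₖ/Fₖ < 1/Fₙ and 0 ≤ a − ⌊a⌋ − Σ_{k=1}^{n} β̄ₖ/Fₖ < 1/Fₙ hold, then ᾱₖ = β̄ₖ for all k ≥ 1. -/
/-!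
Digit by digit: if both expansions agree before position `n`, they leave the same remainder `r`,
and the bound at `n` reads `digitₙ ≤ r Fₙ < digitₙ + 1` for either sequence, so both digits
equal `⌊r Fₙ⌋`.
-/

open Finset

lemma Nat.floor_mul_eq_of_sub_div_mem_Ico {t d : ℝ} (hd : 0 < d) {x : ℕ}
    (h : 0 ≤ t - x / d ∧ t - x / d < 1 / d) : ⌊t * d⌋₊ = x := by
  obtain ⟨hlo, hhi⟩ := h
  have hle : (x : ℝ) ≤ t * d := by
    rwa [sub_nonneg, div_le_iff₀ hd] at hlo
  have hlt : t * d < x + 1 := by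
    rwa [sub_lt_iff_lt_add, ← add_div, lt_div_iff₀ hd, add_comm] at hhi
  exact (Nat.floor_eq_iff ((Nat.cast_nonneg x).trans hle)).mpr ⟨hle, hlt⟩

theorem eq_of_sub_sum_Icc_div_mem_Ico {s : ℝ} {d : ℕ → ℝ} (hd : ∀ k, 0 < d k) {α β : ℕ → ℕ}
    (hα : ∀ n, 1 ≤ n →
      0 ≤ s - ∑ k ∈ Icc 1 n, (α k : ℝ) / d k ∧ s - ∑ k ∈ Icc 1 n, (α k : ℝ) / d k < 1 / d n)
    (hβ : ∀ n, 1 ≤ n →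
      0 ≤ s - ∑ k ∈ Icc 1 n, (β k : ℝ) / d k ∧ s - ∑ k ∈ Icc 1 n, (β k : ℝ) / d k < 1 / d n) :
    ∀ n, 1 ≤ n → α n = β n := by
  intro n hn
  induction n using Nat.strong_induction_on with
  | _ n ih =>
    obtain ⟨m, rfl⟩ : ∃ m, n = m + 1 := ⟨n - 1, by omega⟩
    have hprefix : ∑ k ∈ Icc 1 m, (α k : ℝ) / d k = ∑ k ∈ Icc 1 m, (β k : ℝ) / d k :=
      sum_congr rfl fun k hk => by
        rw [ih k (Nat.lt_succ_of_le (mem_Icc.mp hk).2) (mem_Icc.mp hk).1]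
    set r := s - ∑ k ∈ Icc 1 m, (β k : ℝ) / d k
    have hαr : 0 ≤ r - α (m + 1) / d (m + 1) ∧ r - α (m + 1) / d (m + 1) < 1 / d (m + 1) := by
      have := hα (m + 1) hn
      rwa [sum_Icc_succ_top (by omega), hprefix, ← sub_sub] at this
    have hβr : 0 ≤ r - β (m + 1) / d (m + 1) ∧ r - β (m + 1) / d (m + 1) < 1 / d (m + 1) := by
      have := hβ (m + 1) hn
      rwa [sum_Icc_succ_top (by omega), ← sub_sub] at this
    rw [← Nat.floor_mul_eq_of_sub_div_mem_Ico (hd _) hαr,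
      Nat.floor_mul_eq_of_sub_div_mem_Ico (hd _) hβr]

theorem fib_series_representation_unique_general (a : ℝ) (α β : ℕ → ℕ)
    (hα : ∀ n : ℕ, 1 ≤ n →
      0 ≤ a - ⌊a⌋ - ∑ k ∈ Finset.Icc 1 n, (α k : ℝ) / Nat.fib (k + 1) ∧
      a - ⌊a⌋ - ∑ k ∈ Finset.Icc 1 n, (α k : ℝ) / Nat.fib (k + 1)
        < 1 / Nat.fib (n + 1))
    (hβ : ∀ n : ℕ, 1 ≤ n →
      0 ≤ a - ⌊a⌋ - ∑ k ∈ Finset.Icc 1 n, (β k : ℝ) / Nat.fib (k + 1) ∧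
      a - ⌊a⌋ - ∑ k ∈ Finset.Icc 1 n, (β k : ℝ) / Nat.fib (k + 1)
        < 1 / Nat.fib (n + 1)) :
    ∀ k : ℕ, 1 ≤ k → α k = β k :=
  eq_of_sub_sum_Icc_div_mem_Ico (d := fun k => (Nat.fib (k + 1) : ℝ))
    (fun k => Nat.cast_pos.mpr (Nat.fib_pos.mpr k.succ_pos)) hα hβ

/-- Uniqueness of the Fibonacci expansion of a real `a ≥ 0`:
if `(ᾱₖ)` and `(β̄ₖ)` are `{0,1}`-valued digit sequences whose partial sums both
satisfy `0 ≤ a − ⌊a⌋ − Σ_{k=1}^n digitₖ/Fₖ < 1/Fₙ` for every `n ≥ 1`, then they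
coincide.  Here `Fₖ = Nat.fib (k+1)`, i.e. `F₀ = F₁ = 1`, `F₂ = 2`, `F₃ = 3`, …. -/
theorem fib_series_representation_unique (a : ℝ) (ha : 0 ≤ a) (α β : ℕ → ℕ)
    (hα01 : ∀ k : ℕ, 1 ≤ k → α k ≤ 1)
    (hβ01 : ∀ k : ℕ, 1 ≤ k → β k ≤ 1)
    (hα : ∀ n : ℕ, 1 ≤ n →
      0 ≤ a - ⌊a⌋ - ∑ k ∈ Finset.Icc 1 n, (α k : ℝ) / Nat.fib (k + 1) ∧
      a - ⌊a⌋ - ∑ k ∈ Finset.Icc 1 n, (α k : ℝ) / Nat.fib (k + 1)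
        < 1 / Nat.fib (n + 1))
    (hβ : ∀ n : ℕ, 1 ≤ n →
      0 ≤ a - ⌊a⌋ - ∑ k ∈ Finset.Icc 1 n, (β k : ℝ) / Nat.fib (k + 1) ∧
      a - ⌊a⌋ - ∑ k ∈ Finset.Icc 1 n, (β k : ℝ) / Nat.fib (k + 1)
        < 1 / Nat.fib (n + 1)) :
    ∀ k : ℕ, 1 ≤ k → α k = β k :=
  fib_series_representation_unique_general a α β hα hβ
end

section
/- Let k > 1 be an integer. Then the infinite series Σ_{n=1}^{∞} 1/(Fₙ·F_{n+2k}) converges and equals (1/F_{2k}) · Σ_{n=1}^{k} 1/(F_{2n−1}·F_{2n}). -/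
/-!
Write `Fₙ` for `fib n`. The defect `F_{a+2} F_b - F_a F_{b+2}` is unchanged under
`(a, b) ↦ (a + 2, b + 2)`, which gives `F_{2k+2} F_{m+2k} = F_{2k} F_{m+2k+2} + F_m`; by induction
on `k` this splits `F_{2k} / (F_m F_{m+2k})` into `∑_{i<k} 1 / (F_{m+2i} F_{m+2i+2})`.
Since `F_{j+2} - F_j = F_{j+1}`, each of the resulting `k` series telescopes:
`1 / (F_j F_{j+2}) = 1 / (F_j F_{j+1}) - 1 / (F_{j+1} F_{j+2})`, so the `i`-th one sums to
`1 / (F_{2i+1} F_{2i+2})`.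
-/

open Finset Filter Topology Nat

theorem Antitone.hasSum_sub_succ {f : ℕ → ℝ} (hf : Antitone f)
    (hf0 : Tendsto f atTop (𝓝 0)) :
    HasSum (fun n => f n - f (n + 1)) (f 0) := by
  have hnonneg (n : ℕ) : 0 ≤ f n - f (n + 1) := sub_nonneg.2 (hf n.le_succ)
  rw [hasSum_iff_tendsto_nat_of_nonneg hnonneg]
  simp only [sum_range_sub']
  simpa using tendsto_const_nhds.sub hf0

namespace Nat

theorem fib_two_mul_add_two_mul_fib_add_two_mul (k m : ℕ) :
    fib (2 * k + 2) * fib (m + 2 * k) = fib (2 * k) * fib (m + 2 * k + 2) + fib m := by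
  induction k with
  | zero => simp
  | succ k ih =>
    rw [mul_add, mul_one, ← add_assoc m]
    simp only [fib_add_two] at ih ⊢
    linear_combination ih

theorem tendsto_fib_atTop : Tendsto fib atTop atTop :=
  (tendsto_add_atTop_iff_nat 2).1 fib_add_two_strictMono.tendsto_atTop

theorem tendsto_inv_fib_mul_fib_succ :
    Tendsto (fun n => ((fib n : ℝ) * fib (n + 1))⁻¹) atTop (𝓝 0) := by
  have h : Tendsto (fun n => (fib n : ℝ)) atTop atTop :=
    tendsto_natCast_atTop_atTop.comp tendsto_fib_atTop
  exact (h.atTop_mul_atTop₀ (h.comp (tendsto_add_atTop_nat 1))).inv_tendsto_atTop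

theorem fib_two_mul_div_fib_mul_fib_add_two_mul {m : ℕ} (hm : 0 < m) (k : ℕ) :
    (fib (2 * k) : ℝ) / (fib m * fib (m + 2 * k)) =
      ∑ i ∈ range k, 1 / ((fib (m + 2 * i) : ℝ) * fib (m + 2 * i + 2)) := by
  induction k with
  | zero => simp
  | succ k ih =>
    have h₀ : (0 : ℝ) < fib m := by exact_mod_cast fib_pos.2 hm
    have h₁ : (0 : ℝ) < fib (m + 2 * k) := by exact_mod_cast fib_pos.2 (by omega)
    have h₂ : (0 : ℝ) < fib (m + 2 * k + 2) := by exact_mod_cast fib_pos.2 (by omega)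
    have key : (fib (2 * k + 2) : ℝ) * fib (m + 2 * k) =
        fib (2 * k) * fib (m + 2 * k + 2) + fib m := by
      exact_mod_cast fib_two_mul_add_two_mul_fib_add_two_mul k m
    rw [sum_range_succ, ← ih, mul_add, mul_one, ← add_assoc m]
    field_simp
    linear_combination key

theorem one_div_fib_mul_fib_add_two {j : ℕ} (hj : 0 < j) :
    1 / ((fib j : ℝ) * fib (j + 2)) =
      1 / ((fib j : ℝ) * fib (j + 1)) - 1 / ((fib (j + 1) : ℝ) * fib (j + 2)) := by
  have h₀ : (0 : ℝ) < fib j := by exact_mod_cast fib_pos.2 hj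
  have h₁ : (0 : ℝ) < fib (j + 1) := by exact_mod_cast fib_pos.2 j.succ_pos
  have h₂ : (fib (j + 2) : ℝ) = fib j + fib (j + 1) := by exact_mod_cast fib_add_two
  rw [h₂]
  field_simp
  ring

theorem hasSum_one_div_fib_mul_fib_add_two {a : ℕ} (ha : 0 < a) :
    HasSum (fun n => 1 / ((fib (n + a) : ℝ) * fib (n + a + 2)))
      (1 / ((fib a : ℝ) * fib (a + 1))) := by
  set u : ℕ → ℝ := fun n => 1 / ((fib (n + a) : ℝ) * fib (n + a + 1)) with hu
  have hanti : Antitone u := antitone_nat_of_succ_le fun n => by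
    have h₀ : (0 : ℝ) < fib (n + a) := by exact_mod_cast fib_pos.2 (by omega)
    have h₁ : (0 : ℝ) < fib (n + a + 1) := by exact_mod_cast fib_pos.2 (by omega)
    apply one_div_le_one_div_of_le (mul_pos h₀ h₁)
    gcongr <;> omega
  have hlim : Tendsto u atTop (𝓝 0) := by
    simpa only [hu, one_div, add_right_comm _ a 1] using
      (tendsto_add_atTop_iff_nat a).2 tendsto_inv_fib_mul_fib_succ
  convert hanti.hasSum_sub_succ hlim using 2 with n
  · simp only [hu, add_right_comm n 1 a, add_assoc (n + a) 1 1]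
    exact one_div_fib_mul_fib_add_two (by omega)
  · simp

end Nat

/-- For an integer `k > 1`, the series `Σ_{n=1}^∞ 1/(Fₙ·F_{n+2k})` converges
and equals `(1/F_{2k}) · Σ_{n=1}^k 1/(F_{2n−1}·F_{2n})`, where `Fₙ = Nat.fib n`. -/
theorem fib_reciprocal_series (k : ℕ) (hk : 1 < k) :
    HasSum (fun n : ℕ => (1 : ℝ) / (Nat.fib (n + 1) * Nat.fib (n + 1 + 2 * k)))
      ((1 / Nat.fib (2 * k)) *
        ∑ n ∈ Finset.Icc 1 k, (1 : ℝ) / (Nat.fib (2 * n - 1) * Nat.fib (2 * n))) := by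
  have hF : (fib (2 * k) : ℝ) ≠ 0 := by exact_mod_cast (fib_pos.2 (by omega)).ne'
  have hterm (n : ℕ) : 1 / ((fib (n + 1) : ℝ) * fib (n + 1 + 2 * k)) =
      1 / fib (2 * k) *
        ∑ i ∈ range k, 1 / ((fib (n + 1 + 2 * i) : ℝ) * fib (n + 1 + 2 * i + 2)) := by
    rw [← fib_two_mul_div_fib_mul_fib_add_two_mul n.succ_pos]
    field_simp
  have hval : ∑ n ∈ Icc 1 k, 1 / ((fib (2 * n - 1) : ℝ) * fib (2 * n)) =
      ∑ i ∈ range k, 1 / ((fib (2 * i + 1) : ℝ) * fib (2 * i + 1 + 1)) := by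
    rw [← Ico_add_one_right_eq_Icc, sum_Ico_eq_sum_range, add_tsub_cancel_right]
    refine sum_congr rfl fun i _ => ?_
    rw [show 2 * (1 + i) - 1 = 2 * i + 1 by omega, show 2 * (1 + i) = 2 * i + 1 + 1 by omega]
  simp only [hterm, hval]
  refine (hasSum_sum fun i _ => ?_).mul_left _
  simpa only [← add_assoc, add_right_comm _ (2 * i) 1] using
    hasSum_one_div_fib_mul_fib_add_two (a := 2 * i + 1) (by omega)
end

section
/- Let a > b > 1 be integers. Then Σ_{n=1}^{b} (−1)ⁿ·F_a/(Fₙ·F_{n+a}) = Σ_{n=1}^{a} (−1)ⁿ·F_b/(Fₙ·F_{n+b}). -/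
noncomputable def fibRatio (n : ℕ) : ℝ := Nat.fib (n + 1) / Nat.fib n

lemma fib_key (a n : ℕ) :
    (Nat.fib (n + a) * Nat.fib (n + 1) : ℤ) =
      (-1) ^ n * Nat.fib a + Nat.fib (n + a + 1) * Nat.fib n := by
  induction n with
  | zero => simp
  | succ n ih =>
    have h1 : Nat.fib (n + 1 + 1) = Nat.fib n + Nat.fib (n + 1) := Nat.fib_add_two
    have h2 : Nat.fib (n + a + 1 + 1) = Nat.fib (n + a) + Nat.fib (n + a + 1) :=
      Nat.fib_add_two
    rw [show n + 1 + a = n + a + 1 from by ring, h1, h2]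
    push_cast
    ring_nf
    ring_nf at ih
    linarith

lemma fib_term (a n : ℕ) (ha : 0 < a) (hn : 0 < n) :
    (-1 : ℝ) ^ n * Nat.fib a / (Nat.fib n * Nat.fib (n + a)) =
      fibRatio n - fibRatio (n + a) := by
  have h1 : (Nat.fib n : ℝ) ≠ 0 := by
    exact_mod_cast (Nat.fib_pos.2 hn).ne'
  have h2 : (Nat.fib (n + a) : ℝ) ≠ 0 := by
    exact_mod_cast (Nat.fib_pos.2 (by omega)).ne'
  have key : ((Nat.fib (n + a) * Nat.fib (n + 1) : ℤ) : ℝ) =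
      (((-1) ^ n * Nat.fib a + Nat.fib (n + a + 1) * Nat.fib n : ℤ) : ℝ) := by
    exact_mod_cast fib_key a n
  push_cast at key
  unfold fibRatio
  field_simp
  linarith

/-- Symmetry identity: for integers `a > b > 1`,
`Σ_{n=1}^b (−1)ⁿ·F_a/(Fₙ·F_{n+a}) = Σ_{n=1}^a (−1)ⁿ·F_b/(Fₙ·F_{n+b})`,
where `Fₙ = Nat.fib n`. -/
theorem fib_alternating_sum_symmetry (a b : ℕ) (hb : 1 < b) (hba : b < a) :
    ∑ n ∈ Finset.Icc 1 b,
        (-1 : ℝ) ^ n * Nat.fib a / (Nat.fib n * Nat.fib (n + a)) =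
    ∑ n ∈ Finset.Icc 1 a,
        (-1 : ℝ) ^ n * Nat.fib b / (Nat.fib n * Nat.fib (n + b)) := by
  have ha0 : 0 < a := by omega
  have hb0 : 0 < b := by omega
  have L : ∑ n ∈ Finset.Icc 1 b,
      (-1 : ℝ) ^ n * Nat.fib a / (Nat.fib n * Nat.fib (n + a)) =
      ∑ n ∈ Finset.Icc 1 b, (fibRatio n - fibRatio (n + a)) :=
    Finset.sum_congr rfl fun n hn => fib_term a n ha0 (by
      simp only [Finset.mem_Icc] at hn; omega)
  have R : ∑ n ∈ Finset.Icc 1 a,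
      (-1 : ℝ) ^ n * Nat.fib b / (Nat.fib n * Nat.fib (n + b)) =
      ∑ n ∈ Finset.Icc 1 a, (fibRatio n - fibRatio (n + b)) :=
    Finset.sum_congr rfl fun n hn => fib_term b n hb0 (by
      simp only [Finset.mem_Icc] at hn; omega)
  rw [L, R]
  have conv : ∀ m k : ℕ, ∑ n ∈ Finset.Icc 1 m, (fibRatio n - fibRatio (n + k)) =
      ∑ i ∈ Finset.range m, (fibRatio (1 + i) - fibRatio (1 + i + k)) := by
    intro m k
    rw [← Finset.Ico_add_one_right_eq_Icc, Finset.sum_Ico_eq_sum_range]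
    simp
  rw [conv, conv]
  have split : ∀ m k : ℕ, ∑ i ∈ Finset.range (m + k), fibRatio (1 + i) =
      (∑ i ∈ Finset.range m, fibRatio (1 + i)) +
        ∑ i ∈ Finset.range k, fibRatio (1 + i + m) := by
    intro m k
    rw [Finset.sum_range_add]
    congr 1
    exact Finset.sum_congr rfl fun i _ => by ring_nf
  have h1 := split a b
  have h2 := split b a
  rw [show b + a = a + b from Nat.add_comm b a] at h2
  rw [Finset.sum_sub_distrib, Finset.sum_sub_distrib]
  linarith
end

section
/- The following two convergent series of real numbers are equal: 2·Σ_{n=1}^{∞} 1/(F_{3n}·φ^{3n}) = 4·Σ_{n=1}^{∞} 1/(F_{6n−3}·F_{6n}), where φ = (1 + √5)/2 is the golden ratio. -/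
/-!
Binet's formula gives `√5 Fₘ φᵐ = φ²ᵐ - (-1)ᵐ`. For odd `m`, together with `φ³ = 2 + √5` this
yields `1/(Fₘ φᵐ) + 1/(Fₘ₊₃ φᵐ⁺³) = 2/(Fₘ Fₘ₊₃)`, so grouping the terms of the left-hand
series (`m = 3, 6, 9, …`) in consecutive pairs `m = 6k + 3, 6k + 6` gives twice the right-hand series.
-/

open Real goldenRatio

theorem HasSum.add_consecutive_pairs {G : Type*} [AddCommGroup G] [UniformSpace G]
    [IsUniformAddGroup G] [CompleteSpace G] [T2Space G] {f : ℕ → G} {a : G} (hf : HasSum f a) :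
    HasSum (fun k ↦ f (2 * k) + f (2 * k + 1)) a := by
  have hmul : Function.Injective (2 * · : ℕ → ℕ) := mul_right_injective₀ two_ne_zero
  have he := (hf.summable.comp_injective hmul).hasSum
  have ho := (hf.summable.comp_injective ((add_left_injective 1).comp hmul)).hasSum
  rw [hf.unique (he.even_add_odd ho)]
  exact he.add ho

theorem Real.goldenRatio_pow_three : φ ^ 3 = 2 + √5 := by
  linear_combination (3 + √5) / 8 * Real.sq_sqrt (show (0 : ℝ) ≤ 5 by norm_num)

theorem Real.sqrt_five_mul_fib_mul_goldenRatio_pow (n : ℕ) :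
    √5 * Nat.fib n * φ ^ n = (φ ^ n) ^ 2 - (-1) ^ n := by
  rw [Real.coe_fib_eq, mul_div_cancel₀ _ (by positivity), sub_mul, ← mul_pow ψ,
    mul_comm ψ, goldenRatio_mul_goldenConj, sq]

theorem Real.summable_one_div_fib_mul_goldenRatio_pow :
    Summable fun n ↦ 1 / (Nat.fib n * φ ^ n) := by
  refine Summable.of_nonneg_of_le (fun n ↦ by positivity) (fun n ↦ ?_)
    (summable_geometric_of_lt_one (by positivity) (inv_lt_one_of_one_lt₀ one_lt_goldenRatio))
  rcases Nat.eq_zero_or_pos n with rfl | hn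
  · simp
  have hfib : (1 : ℝ) ≤ Nat.fib n := by exact_mod_cast Nat.fib_pos.mpr hn
  rw [inv_pow, ← one_div]
  exact one_div_le_one_div_of_le (by positivity) (le_mul_of_one_le_left (by positivity) hfib)

theorem Real.one_div_fib_mul_goldenRatio_pow_add_three {m : ℕ} (hm : Odd m) :
    1 / (Nat.fib m * φ ^ m) + 1 / (Nat.fib (m + 3) * φ ^ (m + 3))
      = 2 / (Nat.fib m * Nat.fib (m + 3)) := by
  have hF : (0 : ℝ) < Nat.fib m := by exact_mod_cast Nat.fib_pos.mpr hm.pos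
  have hF3 : (0 : ℝ) < Nat.fib (m + 3) := by exact_mod_cast Nat.fib_pos.mpr (by omega)
  have hbinet := sqrt_five_mul_fib_mul_goldenRatio_pow m
  have hbinet3 := sqrt_five_mul_fib_mul_goldenRatio_pow (m + 3)
  rw [hm.neg_one_pow] at hbinet
  rw [(hm.add_odd (by decide : Odd 3)).neg_one_pow] at hbinet3
  have h5 : √5 ^ 2 = 5 := Real.sq_sqrt (by norm_num)
  rw [pow_add, goldenRatio_pow_three] at hbinet3 ⊢
  have ha : 0 < φ ^ m := pow_pos goldenRatio_pos m
  generalize φ ^ m = a at ha hbinet hbinet3 ⊢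
  have key : Nat.fib (m + 3) * (2 + √5) + Nat.fib m = 2 * a * (2 + √5) := by
    refine mul_left_cancel₀ (mul_ne_zero (by positivity : √5 ≠ 0) ha.ne') ?_
    linear_combination hbinet3 + hbinet - a ^ 2 * h5
  field_simp
  linear_combination key

/-- The two convergent series `2·Σ_{n=1}^∞ 1/(F_{3n}·φ^{3n})` and
`4·Σ_{n=1}^∞ 1/(F_{6n−3}·F_{6n})` are equal, where `Fₙ = Nat.fib n` and
`φ = (1 + √5)/2` is the golden ratio. -/
theorem fib_goldenRatio_series_eq :
    Summable (fun n : ℕ =>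
      (1 : ℝ) / (Nat.fib (3 * (n + 1)) * ((1 + Real.sqrt 5) / 2) ^ (3 * (n + 1)))) ∧
    Summable (fun n : ℕ =>
      (1 : ℝ) / (Nat.fib (6 * (n + 1) - 3) * Nat.fib (6 * (n + 1)))) ∧
    2 * ∑' n : ℕ,
        (1 : ℝ) / (Nat.fib (3 * (n + 1)) * ((1 + Real.sqrt 5) / 2) ^ (3 * (n + 1)))
      = 4 * ∑' n : ℕ,
        (1 : ℝ) / (Nat.fib (6 * (n + 1) - 3) * Nat.fib (6 * (n + 1))) := by
  set t : ℕ → ℝ := fun n ↦ 1 / (Nat.fib (3 * (n + 1)) * φ ^ (3 * (n + 1)))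
  set s : ℕ → ℝ := fun n ↦ 1 / (Nat.fib (6 * (n + 1) - 3) * Nat.fib (6 * (n + 1)))
  have ht : Summable t :=
    summable_one_div_fib_mul_goldenRatio_pow.comp_injective fun _ _ h ↦ by omega
  have hpairs (k : ℕ) : t (2 * k) + t (2 * k + 1) = 2 * s k := by
    have hodd : Odd (6 * k + 3) := ⟨3 * k + 1, by ring⟩
    simp only [t, s, show 3 * (2 * k + 1) = 6 * k + 3 by ring,
      show 3 * (2 * k + 1 + 1) = 6 * k + 3 + 3 by ring, show 6 * (k + 1) = 6 * k + 3 + 3 by ring,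
      Nat.add_sub_cancel, one_div_fib_mul_goldenRatio_pow_add_three hodd]
    ring
  have hs : HasSum s ((∑' n, t n) / 2) := by
    simpa [hpairs] using ht.hasSum.add_consecutive_pairs.div_const 2
  exact ⟨ht, hs.summable, by rw [hs.tsum_eq]; ring⟩
end

section
/- The sum of the distances from √5 to the convergents of its continued fraction expansion [2; 4, 4, 4, …] satisfies Σ_{n=1}^{∞} |√5 − (F_{3n−1} + F_{3n+1})/F_{3n}| = 4·Σ_{n=1}^{∞} 1/(F_{6n−3}·F_{6n}); here the n-th convergent of √5 equals L_{3n}/F_{3n} = (F_{3n−1} + F_{3n+1})/F_{3n}, where L denotes the Lucas numbers. -/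
/-!
By Binet's formula `√5 Fₘ = φᵐ - ψᵐ` and `Lₘ = φᵐ + ψᵐ`, so the error of `Lₘ / Fₘ` is
`√5 - Lₘ / Fₘ = -2ψᵐ / Fₘ`: it is geometrically small and its sign is that of `(-1)ᵐ⁺¹`.
Grouping the terms of index `m = 6k + 3` and `m + 3 = 6k + 6`, whose errors have opposite
signs, turns the pair of absolute values into the difference of the two errors, and
`ψᵐ⁺³ Fₘ - ψᵐ Fₘ₊₃ = F₃ = 2` for odd `m` gives `4 / (Fₘ Fₘ₊₃)`.
-/

open Nat (fib)
open Real goldenRatio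

lemma coe_fib_sub_one_add_fib_add_one {m : ℕ} (hm : m ≠ 0) :
    (fib (m - 1) : ℝ) + fib (m + 1) = φ ^ m + ψ ^ m := by
  obtain ⟨k, rfl⟩ := Nat.exists_eq_add_one_of_ne_zero hm
  rw [add_tsub_cancel_right, coe_fib_eq, coe_fib_eq, ← add_div, div_eq_iff (by positivity),
    ← goldenRatio_sub_goldenConj]
  linear_combination (φ ^ k - ψ ^ k) * goldenRatio_mul_goldenConj

lemma goldenConj_pow_add_mul_fib_sub (m d : ℕ) :
    ψ ^ (m + d) * fib m - ψ ^ m * fib (m + d) = -(-1) ^ m * fib d := by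
  have h : (φ * ψ) ^ m = (-1) ^ m := by rw [goldenRatio_mul_goldenConj]
  rw [coe_fib_eq, coe_fib_eq, coe_fib_eq, ← h, mul_pow]
  ring

noncomputable def lucasRatio (m : ℕ) : ℝ :=
  ((fib (m - 1) : ℝ) + fib (m + 1)) / fib m

lemma sqrt_five_sub_lucasRatio {m : ℕ} (hm : m ≠ 0) :
    √5 - lucasRatio m = -2 * ψ ^ m / fib m := by
  have hF : (fib m : ℝ) ≠ 0 := by exact_mod_cast (Nat.fib_pos.2 (pos_of_ne_zero hm)).ne'
  rw [lucasRatio, coe_fib_sub_one_add_fib_add_one hm, eq_div_iff hF, sub_mul,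
    div_mul_cancel₀ _ hF, coe_fib_eq, mul_div_cancel₀ _ (by positivity)]
  ring

lemma abs_sqrt_five_sub_lucasRatio_le {m : ℕ} (hm : m ≠ 0) :
    |√5 - lucasRatio m| ≤ 2 * |ψ| ^ m := by
  have hF : (1 : ℝ) ≤ fib m := by exact_mod_cast Nat.fib_pos.2 (pos_of_ne_zero hm)
  rw [sqrt_five_sub_lucasRatio hm, abs_div, abs_mul, abs_pow, Nat.abs_cast, abs_neg, abs_two]
  exact div_le_self (by positivity) hF

lemma summable_abs_sqrt_five_sub_lucasRatio :
    Summable fun m ↦ |√5 - lucasRatio (m + 1)| := by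
  have hψ : |ψ| < 1 := abs_lt.2 ⟨neg_one_lt_goldenConj, goldenConj_neg.trans one_pos⟩
  refine .of_nonneg_of_le (fun _ ↦ abs_nonneg _)
    (fun m ↦ abs_sqrt_five_sub_lucasRatio_le m.succ_ne_zero) ?_
  simp only [pow_succ]
  exact ((summable_geometric_of_lt_one (abs_nonneg _) hψ).mul_right |ψ|).mul_left 2

lemma abs_sqrt_five_sub_lucasRatio_add {m : ℕ} (hm : Odd m) :
    |√5 - lucasRatio m| + |√5 - lucasRatio (m + 3)| = 4 / (fib m * fib (m + 3)) := by
  have hF : (0 : ℝ) < fib m := by exact_mod_cast Nat.fib_pos.2 hm.pos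
  have hF₃ : (0 : ℝ) < fib (m + 3) := by exact_mod_cast Nat.fib_pos.2 (by omega)
  have hψm : ψ ^ m < 0 := hm.pow_neg goldenConj_neg
  have hψm₃ : 0 < ψ ^ (m + 3) := (hm.add_odd (by decide)).pow_pos goldenConj_ne_zero
  have key : ψ ^ (m + 3) * fib m - ψ ^ m * fib (m + 3) = 2 := by
    simpa [hm.neg_one_pow, Nat.fib_add_two] using goldenConj_pow_add_mul_fib_sub m 3
  rw [sqrt_five_sub_lucasRatio hm.pos.ne', sqrt_five_sub_lucasRatio (by omega),
    abs_of_pos (div_pos (by linarith) hF), abs_of_neg (div_neg_of_neg_of_pos (by linarith) hF₃)]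
  field_simp
  linear_combination 2 * key

/-- The sum of the distances from `√5` to the convergents
`(F_{3n−1} + F_{3n+1})/F_{3n}` of its continued fraction `[2; 4, 4, 4, …]`
equals `4·Σ_{n=1}^∞ 1/(F_{6n−3}·F_{6n})`, where `Fₙ = Nat.fib n`. -/
theorem sqrt_five_convergents_series :
    ∑' n : ℕ,
        |Real.sqrt 5 -
          ((Nat.fib (3 * (n + 1) - 1) : ℝ) + Nat.fib (3 * (n + 1) + 1)) /
            Nat.fib (3 * (n + 1))|
      = 4 * ∑' n : ℕ,
          (1 : ℝ) / (Nat.fib (6 * (n + 1) - 3) * Nat.fib (6 * (n + 1))) := by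
  set f : ℕ → ℝ := fun n ↦ |√5 - lucasRatio (3 * (n + 1))|
  have hf : Summable f :=
    (summable_abs_sqrt_five_sub_lucasRatio.comp_injective (i := fun n ↦ 3 * n + 2)
      fun a b h ↦ by simp only at h; omega).congr
      fun n ↦ by simp only [f, Function.comp, mul_add, mul_one]
  have hpair (k : ℕ) :
      f (2 * k) + f (2 * k + 1) = 4 * (1 / (fib (6 * (k + 1) - 3) * fib (6 * (k + 1)))) := by
    simp only [f]
    rw [show 3 * (2 * k + 1) = 6 * k + 3 by ring, show 3 * (2 * k + 1 + 1) = 6 * k + 3 + 3 by ring,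
      show 6 * (k + 1) - 3 = 6 * k + 3 by omega, show 6 * (k + 1) = 6 * k + 3 + 3 by ring,
      abs_sqrt_five_sub_lucasRatio_add ⟨3 * k + 1, by ring⟩, mul_one_div]
  have hf_even : Summable fun k ↦ f (2 * k) := hf.comp_injective fun _ _ h ↦ by omega
  have hf_odd : Summable fun k ↦ f (2 * k + 1) := hf.comp_injective fun _ _ h ↦ by omega
  calc ∑' n, f n
      = ∑' k, (f (2 * k) + f (2 * k + 1)) := by
        rw [← tsum_even_add_odd hf_even hf_odd, hf_even.tsum_add hf_odd]
    _ = _ := by simp only [hpair, tsum_mul_left]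
end
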